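/- Let H be a finite simple graph with a fixed interval representation v ↦ [a_v, b_v], and let T be a binary search tree that stabs H. Then: (1) for every vertex v of H, x_T(v) ∈ [a_v, b_v]; and (2) for every clique C of H, the nodes {x_T(v) : v ∈ C} all lie on a single root-to-leaf path of T, i.e., they are pairwise comparable under the ancestor relation of T. -/
import Mathlib


attribute [local instance] Classical.propDecidable

/-- A binary tree with real-number node values. -/
inductive BT : Type
  | leaf : BT
  | node : BT → ℝ → BT → BT

namespace BT

/-- The set of values stored in the tree. -/
noncomputable def nodes : BT → Finset ℝ
  | .leaf => ∅
  | .node l v r => insert v (nodes l ∪ nodes r)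

/-- The signature of `x` in the tree: the bit string of the search path for `x`
(`false` = step to a left child, `true` = step to a right child). For a node `x` of the
tree, its length is the depth `d_T(x)`. -/
noncomputable def sig : BT → ℝ → List Bool
  | .leaf, _ => []
  | .node l v r, x =>
    if x < v then false :: sig l x
    else if v < x then true :: sig r x
    else []

/-- The number of nodes of the tree. -/
def size : BT → ℕ
  | .leaf => 0
  | .node l _ r => size l + size r + 1

/-- The binary-search-tree property: all values in a left subtree are smaller than the
value at the node, all values in a right subtree are larger. -/
def isBST : BT → Prop
  | .leaf => True
  | .node l v r => (∀ x ∈ nodes l, x < v) ∧ (∀ x ∈ nodes r, v < x) ∧ isBST l ∧ isBST r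

/-- The height of the tree: the maximum depth of a node (0 for the empty tree). -/
noncomputable def height (t : BT) : ℕ := (nodes t).sup fun x => (sig t x).length

/-- The subtree rooted at the node holding the value `x` (a leaf if `x` is absent). -/
noncomputable def subtreeAt : BT → ℝ → BT
  | .leaf, _ => .leaf
  | .node l v r, x =>
    if x < v then subtreeAt l x
    else if v < x then subtreeAt r x
    else .node l v r

end BT

namespace BT

noncomputable def follow : BT → List Bool → BT
  | t, [] => t
  | .leaf, _ :: _ => .leaf
  | .node l _ _, false :: p => follow l p
  | .node _ _ r, true :: p => follow r p

@[simp] lemma follow_nil (t : BT) : t.follow [] = t := by cases t <;> rfl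

@[simp] lemma follow_leaf : ∀ (p : List Bool), BT.leaf.follow p = BT.leaf
  | [] => rfl
  | _ :: _ => rfl

@[simp] lemma follow_cons_false (l r : BT) (v : ℝ) (p : List Bool) :
    (BT.node l v r).follow (false :: p) = l.follow p := rfl

@[simp] lemma follow_cons_true (l r : BT) (v : ℝ) (p : List Bool) :
    (BT.node l v r).follow (true :: p) = r.follow p := rfl

lemma mem_nodes_node {l r : BT} {v x : ℝ} :
    x ∈ (BT.node l v r).nodes ↔ x = v ∨ x ∈ l.nodes ∨ x ∈ r.nodes := by
  simp [nodes]

lemma sig_node (l r : BT) (v x : ℝ) :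
    (BT.node l v r).sig x =
      if x < v then false :: l.sig x else if v < x then true :: r.sig x else [] := rfl

lemma sig_node_self (l r : BT) (v : ℝ) : (BT.node l v r).sig v = [] := by
  simp [sig_node]

lemma eq_root_of_sig_nil {l r : BT} {v z : ℝ} (h : (BT.node l v r).sig z = []) : z = v := by
  rw [sig_node] at h
  split_ifs at h with h1 h2
  exact le_antisymm (not_lt.mp h2) (not_lt.mp h1)

lemma mem_left_of_lt {l r : BT} {v x : ℝ} (ht : (BT.node l v r).isBST)
    (hx : x ∈ (BT.node l v r).nodes) (hlt : x < v) : x ∈ l.nodes := by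
  rcases mem_nodes_node.mp hx with h | h | h
  · exact absurd (h ▸ hlt) (lt_irrefl v)
  · exact h
  · exact absurd (ht.2.1 x h) (by linarith)

lemma mem_right_of_gt {l r : BT} {v x : ℝ} (ht : (BT.node l v r).isBST)
    (hx : x ∈ (BT.node l v r).nodes) (hlt : v < x) : x ∈ r.nodes := by
  rcases mem_nodes_node.mp hx with h | h | h
  · exact absurd (h ▸ hlt) (lt_irrefl v)
  · exact absurd (ht.1 x h) (by linarith)
  · exact h

lemma nodes_follow_subset : ∀ (p : List Bool) (t : BT) {x : ℝ},
    x ∈ (t.follow p).nodes → x ∈ t.nodes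
  | [], t, x, h => by rwa [follow_nil] at h
  | _ :: _, .leaf, x, h => by simp [nodes] at h
  | false :: p, .node l v r, x, h =>
      mem_nodes_node.mpr (Or.inr (Or.inl (nodes_follow_subset p l h)))
  | true :: p, .node l v r, x, h =>
      mem_nodes_node.mpr (Or.inr (Or.inr (nodes_follow_subset p r h)))

lemma follow_append : ∀ (p q : List Bool) (t : BT),
    t.follow (p ++ q) = (t.follow p).follow q
  | [], q, t => by rw [List.nil_append, follow_nil]
  | d :: p, q, .leaf => by simp
  | false :: p, q, .node l v r => follow_append p q l
  | true :: p, q, .node l v r => follow_append p q r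

lemma isBST_follow : ∀ (p : List Bool) (t : BT), t.isBST → (t.follow p).isBST
  | [], t, h => by rwa [follow_nil]
  | _ :: _, .leaf, h => by rw [follow_leaf]; trivial
  | false :: p, .node l v r, h => isBST_follow p l h.2.2.1
  | true :: p, .node l v r, h => isBST_follow p r h.2.2.2

lemma sig_follow : ∀ (p : List Bool) (t : BT), t.isBST → ∀ {x : ℝ},
    x ∈ (t.follow p).nodes → t.sig x = p ++ (t.follow p).sig x
  | [], t, _, x, _ => by rw [follow_nil]; rfl
  | _ :: _, .leaf, _, x, h => by simp [nodes] at h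
  | false :: p, .node l v r, ht, x, h => by
      have hxl : x ∈ l.nodes := nodes_follow_subset p l h
      have hlt : x < v := ht.1 x hxl
      rw [sig_node, if_pos hlt, sig_follow p l ht.2.2.1 h]
      rfl
  | true :: p, .node l v r, ht, x, h => by
      have hxr : x ∈ r.nodes := nodes_follow_subset p r h
      have hgt : v < x := ht.2.1 x hxr
      rw [sig_node, if_neg (by linarith), if_pos hgt, sig_follow p r ht.2.2.2 h]
      rfl

lemma follow_of_sig : ∀ (p : List Bool) (t : BT), t.isBST → ∀ {x : ℝ} {q : List Bool},
    x ∈ t.nodes → t.sig x = p ++ q → x ∈ (t.follow p).nodes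
  | [], t, _, x, q, hx, _ => by rwa [follow_nil]
  | _ :: _, .leaf, _, x, q, hx, _ => by simp [nodes] at hx
  | d :: p, .node l v r, ht, x, q, hx, hsig => by
      rw [sig_node] at hsig
      split_ifs at hsig with h1 h2
      · obtain ⟨hd, hs⟩ := List.cons_eq_cons.mp hsig
        subst hd
        exact follow_of_sig p l ht.2.2.1 (mem_left_of_lt ht hx h1) hs
      · obtain ⟨hd, hs⟩ := List.cons_eq_cons.mp hsig
        subst hd
        exact follow_of_sig p r ht.2.2.2 (mem_right_of_gt ht hx h2) hs
      · simp at hsig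

lemma sig_follow_eq {p q : List Bool} {t : BT} (ht : t.isBST) {x : ℝ}
    (hx : x ∈ t.nodes) (hsig : t.sig x = p ++ q) : (t.follow p).sig x = q := by
  have h1 := follow_of_sig p t ht hx hsig
  have h2 := sig_follow p t ht h1
  rw [h2] at hsig
  exact (List.append_cancel_left hsig)

end BT

/-- `x` is a `T`-ancestor of `z`: both are nodes of `t` and `x` lies on the path from
the root to `z`, i.e. the signature of `x` is a prefix of the signature of `z`. -/
def IsAncestor (t : BT) (x z : ℝ) : Prop :=
  x ∈ t.nodes ∧ z ∈ t.nodes ∧ t.sig x <+: t.sig z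

/-- `z` is the lowest common `T`-ancestor of the set `S` of nodes of `t`: `z` is a node
of `t` which is a `T`-ancestor of every element of `S` and has maximum depth among such
nodes. -/
def IsLCA (t : BT) (S : Set ℝ) (z : ℝ) : Prop :=
  z ∈ t.nodes ∧ (∀ s ∈ S, IsAncestor t z s) ∧
    ∀ z' ∈ t.nodes, (∀ s ∈ S, IsAncestor t z' s) → (t.sig z').length ≤ (t.sig z).length

open BT in
lemma child_anc {t : BT} (ht : t.isBST) {z s : ℝ} (hz : z ∈ t.nodes) (hs : s ∈ t.nodes)
    (hpre : t.sig z <+: t.sig s) (hne : z ≠ s) :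
    ∃ u ∈ t.nodes, t.sig u = t.sig z ++ [decide (z < s)] ∧ t.sig u <+: t.sig s := by
  obtain ⟨q, hq⟩ := hpre
  have hzf : z ∈ (t.follow (t.sig z)).nodes :=
    follow_of_sig _ t ht hz (q := []) (by simp)
  have hsf : s ∈ (t.follow (t.sig z)).nodes := follow_of_sig _ t ht hs hq.symm
  have hsq : (t.follow (t.sig z)).sig s = q := sig_follow_eq ht hs hq.symm
  have hzz : (t.follow (t.sig z)).sig z = [] :=
    sig_follow_eq (q := []) ht hz (by simp)
  obtain ⟨l, u, r, htt⟩ : ∃ l u r, t.follow (t.sig z) = BT.node l u r := by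
    cases h : t.follow (t.sig z) with
    | leaf => rw [h] at hzf; simp [nodes] at hzf
    | node l u r => exact ⟨l, u, r, rfl⟩
  rw [htt] at hzf hsf hsq hzz
  have hzu : z = u := eq_root_of_sig_nil hzz
  subst hzu
  have httb : (BT.node l z r).isBST := htt ▸ isBST_follow _ t ht
  by_cases hlt : z < s
  · have hsr : s ∈ r.nodes := mem_right_of_gt httb hsf hlt
    have hfr : t.follow (t.sig z ++ [true]) = r := by
      rw [follow_append, htt, follow_cons_true, follow_nil]
    obtain ⟨l', w, r', hr⟩ : ∃ l' w r', r = BT.node l' w r' := by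
      cases r with
      | leaf => simp [nodes] at hsr
      | node l' w r' => exact ⟨l', w, r', rfl⟩
    have hwr : w ∈ r.nodes := by rw [hr]; exact mem_nodes_node.mpr (Or.inl rfl)
    have hwn : w ∈ t.nodes := nodes_follow_subset _ t (htt ▸ (mem_nodes_node.mpr (Or.inr (Or.inr hwr))))
    have hws : t.sig w = (t.sig z ++ [true]) ++ r.sig w := by
      rw [← hfr]; exact sig_follow _ t ht (by rw [hfr]; exact hwr)
    have hss : t.sig s = (t.sig z ++ [true]) ++ r.sig s := by
      rw [← hfr]; exact sig_follow _ t ht (by rw [hfr]; exact hsr)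
    have hrw : r.sig w = [] := by rw [hr]; exact sig_node_self _ _ _
    refine ⟨w, hwn, ?_, ?_⟩
    · rw [hws, hrw, List.append_nil, decide_eq_true hlt]
    · rw [hws, hrw, List.append_nil, hss]
      exact ⟨r.sig s, rfl⟩
  · have hgt : s < z := lt_of_le_of_ne (not_lt.mp hlt) (Ne.symm hne)
    have hsr : s ∈ l.nodes := mem_left_of_lt httb hsf hgt
    have hfr : t.follow (t.sig z ++ [false]) = l := by
      rw [follow_append, htt, follow_cons_false, follow_nil]
    obtain ⟨l', w, r', hr⟩ : ∃ l' w r', l = BT.node l' w r' := by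
      cases l with
      | leaf => simp [nodes] at hsr
      | node l' w r' => exact ⟨l', w, r', rfl⟩
    have hwr : w ∈ l.nodes := by rw [hr]; exact mem_nodes_node.mpr (Or.inl rfl)
    have hwn : w ∈ t.nodes := nodes_follow_subset _ t (htt ▸ (mem_nodes_node.mpr (Or.inr (Or.inl hwr))))
    have hws : t.sig w = (t.sig z ++ [false]) ++ l.sig w := by
      rw [← hfr]; exact sig_follow _ t ht (by rw [hfr]; exact hwr)
    have hss : t.sig s = (t.sig z ++ [false]) ++ l.sig s := by
      rw [← hfr]; exact sig_follow _ t ht (by rw [hfr]; exact hsr)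
    have hrw : l.sig w = [] := by rw [hr]; exact sig_node_self _ _ _
    refine ⟨w, hwn, ?_, ?_⟩
    · rw [hws, hrw, List.append_nil, decide_eq_false hlt]
    · rw [hws, hrw, List.append_nil, hss]
      exact ⟨l.sig s, rfl⟩

open BT in
lemma lca_mem {t : BT} (ht : t.isBST) {a b z : ℝ}
    (hne : ∃ x ∈ t.nodes, x ∈ Set.Icc a b)
    (hz : IsLCA t {x | x ∈ t.nodes ∧ x ∈ Set.Icc a b} z) : z ∈ Set.Icc a b := by
  by_contra hzi
  obtain ⟨s0, hs0n, hs0i⟩ := hne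
  obtain ⟨hzn, hanc, hmax⟩ := hz
  have hside : ∀ x ∈ Set.Icc a b, (z < x ↔ z < s0) ∧ z ≠ x := by
    intro x hx
    rcases lt_or_ge z a with hza | hza
    · constructor
      · constructor <;> intro _
        · exact lt_of_lt_of_le hza hs0i.1
        · exact lt_of_lt_of_le hza hx.1
      · intro he; subst he; exact absurd hx.1 (not_le.mpr hza)
    · have hzb : b < z := by
        by_contra hc
        exact hzi ⟨hza, not_lt.mp hc⟩
      constructor
      · constructor <;> intro hh
        · exact absurd hh (not_lt.mpr (le_of_lt (lt_of_le_of_lt hx.2 hzb)))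
        · exact absurd hh (not_lt.mpr (le_of_lt (lt_of_le_of_lt hs0i.2 hzb)))
      · intro he; subst he; exact absurd hx.2 (not_le.mpr hzb)
  have hanc0 := hanc s0 ⟨hs0n, hs0i⟩
  obtain ⟨u, hun, husig, _⟩ :=
    child_anc ht hzn hs0n hanc0.2.2 (hside s0 hs0i).2
  have hucomm : ∀ s ∈ {x | x ∈ t.nodes ∧ x ∈ Set.Icc a b}, IsAncestor t u s := by
    intro s hsS
    obtain ⟨hsn, hsi⟩ := hsS
    obtain ⟨u', hun', husig', hupre'⟩ :=
      child_anc ht hzn hsn (hanc s ⟨hsn, hsi⟩).2.2 (hside s hsi).2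
    have : t.sig u = t.sig u' := by
      rw [husig, husig']
      congr 1
      simp [decide_eq_decide, (hside s hsi).1]
    exact ⟨hun, hsn, this ▸ hupre'⟩
  have := hmax u hun hucomm
  rw [husig] at this
  simp at this

open BT in
lemma diverge : ∀ {l1 l2 : List Bool}, ¬ (l1 <+: l2 ∨ l2 <+: l1) →
    ∃ p b r1 r2, l1 = p ++ b :: r1 ∧ l2 = p ++ (!b) :: r2
  | [], l2, h => absurd (Or.inl (List.nil_prefix)) h
  | _ :: _, [], h => absurd (Or.inr (List.nil_prefix)) h
  | b1 :: t1, b2 :: t2, h => by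
    by_cases hb : b1 = b2
    · subst hb
      have ht12 : ¬ (t1 <+: t2 ∨ t2 <+: t1) := by
        rintro (⟨q, hq⟩ | ⟨q, hq⟩)
        · exact h (Or.inl ⟨q, by simp [hq]⟩)
        · exact h (Or.inr ⟨q, by simp [hq]⟩)
      obtain ⟨p, c, r1, r2, h1, h2⟩ := diverge ht12
      exact ⟨b1 :: p, c, r1, r2, by simp [h1], by simp [h2]⟩
    · refine ⟨[], b1, t1, t2, rfl, ?_⟩
      cases b1 <;> cases b2 <;> simp_all

open BT in
lemma lca_sep {t : BT} (ht : t.isBST) {a1 b1 a2 b2 z1 z2 : ℝ}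
    (hz1 : IsLCA t {x | x ∈ t.nodes ∧ x ∈ Set.Icc a1 b1} z1)
    (hz2 : IsLCA t {x | x ∈ t.nodes ∧ x ∈ Set.Icc a2 b2} z2)
    (hne1 : ∃ x ∈ t.nodes, x ∈ Set.Icc a1 b1)
    (hne2 : ∃ x ∈ t.nodes, x ∈ Set.Icc a2 b2)
    {p : List Bool} {l1 l2 : List Bool}
    (h1 : t.sig z1 = p ++ false :: l1) (h2 : t.sig z2 = p ++ true :: l2) :
    ∃ u, b1 < u ∧ u < a2 := by
  have hz1f : z1 ∈ (t.follow p).nodes := follow_of_sig p t ht hz1.1 h1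
  have hz1s : (t.follow p).sig z1 = false :: l1 := sig_follow_eq ht hz1.1 h1
  have hz2f : z2 ∈ (t.follow p).nodes := follow_of_sig p t ht hz2.1 h2
  have hz2s : (t.follow p).sig z2 = true :: l2 := sig_follow_eq ht hz2.1 h2
  obtain ⟨l, u, r, htt⟩ : ∃ l u r, t.follow p = BT.node l u r := by
    cases h : t.follow p with
    | leaf => rw [h] at hz1f; simp [nodes] at hz1f
    | node l u r => exact ⟨l, u, r, rfl⟩
  have hlt_of_sig : ∀ x : ℝ, ∀ m : List Bool, (t.follow p).sig x = false :: m → x < u := by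
    intro x m hx
    rw [htt, sig_node] at hx
    split_ifs at hx with hh1 hh2 <;> simp_all
  have hgt_of_sig : ∀ x : ℝ, ∀ m : List Bool, (t.follow p).sig x = true :: m → u < x := by
    intro x m hx
    rw [htt, sig_node] at hx
    split_ifs at hx with hh1 hh2 <;> simp_all
  have hun : u ∈ t.nodes :=
    nodes_follow_subset p t (htt ▸ mem_nodes_node.mpr (Or.inl rfl))
  have husig : t.sig u = p := by
    have : t.sig u = p ++ (t.follow p).sig u :=
      sig_follow p t ht (htt ▸ mem_nodes_node.mpr (Or.inl rfl))
    rw [this, htt, sig_node_self, List.append_nil]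
  -- every element of S1 is < u, every element of S2 is > u
  have hS1 : ∀ s ∈ t.nodes, s ∈ Set.Icc a1 b1 → s < u := by
    intro s hsn hsi
    obtain ⟨q, hq⟩ := (hz1.2.1 s ⟨hsn, hsi⟩).2.2
    have hsq : t.sig s = p ++ false :: (l1 ++ q) := by
      rw [← hq, h1]; simp
    exact hlt_of_sig s _ (sig_follow_eq ht hsn hsq)
  have hS2 : ∀ s ∈ t.nodes, s ∈ Set.Icc a2 b2 → u < s := by
    intro s hsn hsi
    obtain ⟨q, hq⟩ := (hz2.2.1 s ⟨hsn, hsi⟩).2.2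
    have hsq : t.sig s = p ++ true :: (l2 ++ q) := by
      rw [← hq, h2]; simp
    exact hgt_of_sig s _ (sig_follow_eq ht hsn hsq)
  -- u is not in either interval
  have hu1 : u ∉ Set.Icc a1 b1 := by
    intro hui
    have := (hz1.2.1 u ⟨hun, hui⟩).2.2
    rw [husig, h1] at this
    have := this.length_le
    simp at this
  have hu2 : u ∉ Set.Icc a2 b2 := by
    intro hui
    have := (hz2.2.1 u ⟨hun, hui⟩).2.2
    rw [husig, h2] at this
    have := this.length_le
    simp at this
  obtain ⟨s1, hs1n, hs1i⟩ := hne1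
  obtain ⟨s2, hs2n, hs2i⟩ := hne2
  have h1u : b1 < u := by
    have ha1u : a1 ≤ u := le_of_lt (lt_of_le_of_lt hs1i.1 (hS1 s1 hs1n hs1i))
    by_contra hc
    exact hu1 ⟨ha1u, not_lt.mp hc⟩
  have h2u : u < a2 := by
    have hub2 : u ≤ b2 := le_of_lt (lt_of_lt_of_le (hS2 s2 hs2n hs2i) hs2i.2)
    by_contra hc
    exact hu2 ⟨not_lt.mp hc, hub2⟩
  exact ⟨u, h1u, h2u⟩

/-- stabbing trees: if `T` is a binary search tree that stabs an
interval representation of a graph `H`, then (1) for every vertex `v`, the lowest common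
`T`-ancestor `x_T(v)` of `V(T) ∩ [a_v, b_v]` lies in `[a_v, b_v]`; and (2) for every
clique `C` of `H`, the nodes `x_T(v)`, `v ∈ C`, are pairwise comparable under the
`T`-ancestor relation (they lie on a single root-to-leaf path). -/
theorem stabbing_tree_lca {V : Type*} (H : SimpleGraph V) (a b : V → ℝ)
    (hab : ∀ v, a v < b v)
    (hdist : ∀ v w, v ≠ w →
      a v ≠ a w ∧ a v ≠ b w ∧ b v ≠ a w ∧ b v ≠ b w)
    (hedge : ∀ v w, H.Adj v w →
      (Set.Icc (a v) (b v) ∩ Set.Icc (a w) (b w)).Nonempty)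
    (t : BT) (ht : t.isBST)
    (hstab : ∀ v, ∃ x ∈ t.nodes, x ∈ Set.Icc (a v) (b v)) :
    (∀ v z, IsLCA t {x | x ∈ t.nodes ∧ x ∈ Set.Icc (a v) (b v)} z →
      z ∈ Set.Icc (a v) (b v)) ∧
    (∀ C : Set V, H.IsClique C → ∀ v ∈ C, ∀ w ∈ C, ∀ zv zw : ℝ,
      IsLCA t {x | x ∈ t.nodes ∧ x ∈ Set.Icc (a v) (b v)} zv →
      IsLCA t {x | x ∈ t.nodes ∧ x ∈ Set.Icc (a w) (b w)} zw →
      IsAncestor t zv zw ∨ IsAncestor t zw zv) := by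
  constructor
  · intro v z hz
    exact lca_mem ht (hstab v) hz
  · intro C hC v hv w hw zv zw hzv hzw
    have hinter : (Set.Icc (a v) (b v) ∩ Set.Icc (a w) (b w)).Nonempty := by
      by_cases hvw : v = w
      · subst hvw
        exact ⟨a v, ⟨le_refl _, (hab v).le⟩, ⟨le_refl _, (hab v).le⟩⟩
      · exact hedge v w (hC hv hw hvw)
    by_cases hcomp : t.sig zv <+: t.sig zw ∨ t.sig zw <+: t.sig zv
    · rcases hcomp with h | h
      · exact Or.inl ⟨hzv.1, hzw.1, h⟩
      · exact Or.inr ⟨hzw.1, hzv.1, h⟩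
    · exfalso
      obtain ⟨p0, hp0v, hp0w⟩ := hinter
      obtain ⟨p, c, r1, r2, h1, h2⟩ := diverge hcomp
      cases c
      · obtain ⟨u, hu1, hu2⟩ :=
          lca_sep ht hzv hzw (hstab v) (hstab w) h1 (by simpa using h2)
        have : p0 ≤ b v := hp0v.2
        have : a w ≤ p0 := hp0w.1
        linarith
      · obtain ⟨u, hu1, hu2⟩ :=
          lca_sep ht hzw hzv (hstab w) (hstab v) (by simpa using h2) h1
        have : p0 ≤ b w := hp0w.2
        have : a v ≤ p0 := hp0v.1
        linarith
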